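/- arXiv:1201.3277 — 5 statements merged into one kernel-verified Lean document; each statement's English description precedes it below -/
import Mathlib

section
/- A stratified Lie algebra of type ⋆ whose first layer has dimension 2 has step at most 2, i.e. V₃ = 0. Consequently, a filiform stratified Lie algebra of step greater than 2 is not of type ⋆. -/
/-- The span of brackets `⁅a, b⁆` with `a ∈ A`, `b ∈ B`. -/
def bracketSpan {g : Type*} [LieRing g] [LieAlgebra ℝ g] (A B : Submodule ℝ g) :
    Submodule ℝ g :=
  Submodule.span ℝ {x : g | ∃ a ∈ A, ∃ b ∈ B, x = ⁅a, b⁆}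

lemma star_V3_bot {g : Type*} [LieRing g] [LieAlgebra ℝ g]
    (V : ℕ → Submodule ℝ g)
    (hstrat : ∀ i ≥ 1, bracketSpan (V 1) (V i) = V (i + 1))
    (X : Module.Basis (Fin 2) ℝ (V 1))
    (hX : ∀ i j : Fin 2, ⁅(X j : g), ⁅(X j : g), (X i : g)⁆⁆ = 0) :
    V 3 = ⊥ := by
  have hspan : (V 1 : Submodule ℝ g) = Submodule.span ℝ (Set.range (fun i => (X i : g))) := by
    have h := congrArg (Submodule.map (V 1).subtype) X.span_eq
    rw [Submodule.map_span, Submodule.map_top, Submodule.range_subtype] at h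
    have himg : (V 1).subtype '' Set.range ⇑X = Set.range (fun i => (X i : g)) := by
      rw [← Set.range_comp]; rfl
    rw [himg] at h
    exact h.symm
  have h3 : ∀ k l m : Fin 2, ⁅(X k : g), ⁅(X l : g), (X m : g)⁆⁆ = 0 := by
    intro k l m
    fin_cases k <;> fin_cases l <;> fin_cases m <;>
      simp only [Fin.mk_zero, Fin.mk_one, lie_self, lie_zero, zero_lie] <;>
      first
        | exact hX _ _
        | (rw [show ⁅(X 1 : g), (X 0 : g)⁆ = -⁅(X 0 : g), (X 1 : g)⁆ from (lie_skew _ _).symm,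
            lie_neg, neg_eq_zero]; exact hX _ _)
        | (rw [show ⁅(X 0 : g), (X 1 : g)⁆ = -⁅(X 1 : g), (X 0 : g)⁆ from (lie_skew _ _).symm,
            lie_neg, neg_eq_zero]; exact hX _ _)
  have T1 : ∀ a ∈ V 1, ∀ k l : Fin 2, ⁅a, ⁅(X k : g), (X l : g)⁆⁆ = (0 : g) := by
    intro a ha k l
    rw [hspan] at ha
    induction ha using Submodule.span_induction with
    | mem x hx => obtain ⟨i, rfl⟩ := hx; exact h3 i k l
    | zero => simp
    | add x y hx hy ihx ihy => simp [add_lie, ihx, ihy]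
    | smul c x hx ih => simp [smul_lie, ih]
  have T2 : ∀ a ∈ V 1, ∀ k : Fin 2, ∀ c ∈ V 1, ⁅a, ⁅(X k : g), c⁆⁆ = (0 : g) := by
    intro a ha k c hc
    rw [hspan] at hc
    induction hc using Submodule.span_induction with
    | mem x hx => obtain ⟨i, rfl⟩ := hx; exact T1 a ha k i
    | zero => simp
    | add x y hx hy ihx ihy => simp [lie_add, ihx, ihy]
    | smul r x hx ih => simp [lie_smul, ih]
  have T3 : ∀ a ∈ V 1, ∀ b ∈ V 1, ∀ c ∈ V 1, ⁅a, ⁅b, c⁆⁆ = (0 : g) := by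
    intro a ha b hb c hc
    rw [hspan] at hb
    induction hb using Submodule.span_induction with
    | mem x hx => obtain ⟨i, rfl⟩ := hx; exact T2 a ha i c hc
    | zero => simp
    | add x y hx hy ihx ihy => simp [add_lie, lie_add, ihx, ihy]
    | smul r x hx ih => simp [smul_lie, lie_smul, ih]
  have hV2 : V 2 = bracketSpan (V 1) (V 1) := (hstrat 1 le_rfl).symm
  have hV3 : V 3 = bracketSpan (V 1) (V 2) := (hstrat 2 (by norm_num)).symm
  rw [hV3, bracketSpan, Submodule.span_eq_bot]
  rintro x ⟨a, ha, b, hb, rfl⟩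
  rw [hV2, bracketSpan] at hb
  induction hb using Submodule.span_induction with
  | mem x hx => obtain ⟨p, hp, q, hq, rfl⟩ := hx; exact T3 a ha p hp q hq
  | zero => simp
  | add x y hx hy ihx ihy => simp [lie_add, ihx, ihy]
  | smul r x hx ih => simp [lie_smul, ih]

/-- A stratified Lie algebra of type ⋆ whose first layer has dimension 2 has step at most 2,
i.e. `V₃ = 0`.  Consequently a filiform stratified Lie algebra (layer dimensions
`2, 1, …, 1`) of step `κ > 2` is not of type ⋆. -/
theorem stmt_11 {g : Type*} [LieRing g] [LieAlgebra ℝ g] (κ : ℕ)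
    (V : ℕ → Submodule ℝ g)
    (hstrat : ∀ i ≥ 1, bracketSpan (V 1) (V i) = V (i + 1))
    (htop : ⨆ i, V i = ⊤) (hlast : V κ ≠ ⊥) (hbeyond : ∀ i > κ, V i = ⊥) :
    ((∃ X : Module.Basis (Fin 2) ℝ (V 1),
        ∀ i j : Fin 2, ⁅(X j : g), ⁅(X j : g), (X i : g)⁆⁆ = 0) → V 3 = ⊥) ∧
    ((∀ i, 2 ≤ i → i ≤ κ → Module.finrank ℝ (V i) = 1) → 2 < κ →
      ¬ ∃ X : Module.Basis (Fin 2) ℝ (V 1),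
          ∀ i j : Fin 2, ⁅(X j : g), ⁅(X j : g), (X i : g)⁆⁆ = 0) := by
  constructor
  · rintro ⟨X, hX⟩
    exact star_V3_bot V hstrat X hX
  · rintro hdim hκ ⟨X, hX⟩
    have h3 := star_V3_bot V hstrat X hX
    have := hdim 3 (by norm_num) (by omega)
    rw [h3] at this
    simp [finrank_bot] at this
end

section
/- Let g = V₁ ⊕ V₂ ⊕ V₃ be the stratified Lie algebra with V₁ = span{X₁,X₂,X₃}, V₂ = span{[X₁,X₂],[X₂,X₃]}, V₃ = span{[[X₁,X₂],X₃]}, relations [X₁,X₃] = b[X₂,X₃] with b ≠ 0, [[X₁,X₂],X₃] = [X₁,[X₂,X₃]], and all other independent commutators of length 3 zero. Then the change of basis Ỹ₁ = X₁ − bX₂, Ỹ₂ = X₂, Ỹ₃ = X₃ yields a basis of V₁ satisfying [Ỹ_j,[Ỹ_j,Ỹ_i]] = 0 for all i,j; hence g is of type ⋆. -/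
/-- Example 2.10 of the paper: in a Lie algebra containing elements `X₁, X₂, X₃` with
`⁅X₁, X₃⁆ = b⁅X₂, X₃⁆` (`b ≠ 0`), `⁅⁅X₁,X₂⁆,X₃⁆ = ⁅X₁,⁅X₂,X₃⁆⁆` and all the other
independent commutators of length 3 equal to zero, the new basis
`Ỹ₁ = X₁ - bX₂, Ỹ₂ = X₂, Ỹ₃ = X₃` of the first layer satisfies the type ⋆ relations
`⁅Ỹ_j, ⁅Ỹ_j, Ỹ_i⁆⁆ = 0` for all `i, j`; hence the algebra is of type ⋆. -/
theorem stmt_14 {g : Type*} [LieRing g] [LieAlgebra ℝ g]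
    (X₁ X₂ X₃ : g) (b : ℝ) (hb : b ≠ 0)
    (h13 : ⁅X₁, X₃⁆ = b • ⁅X₂, X₃⁆)
    (hjac : ⁅⁅X₁, X₂⁆, X₃⁆ = ⁅X₁, ⁅X₂, X₃⁆⁆)
    (h112 : ⁅X₁, ⁅X₁, X₂⁆⁆ = 0)
    (h221 : ⁅X₂, ⁅X₂, X₁⁆⁆ = 0)
    (h223 : ⁅X₂, ⁅X₂, X₃⁆⁆ = 0)
    (h323 : ⁅X₃, ⁅X₂, X₃⁆⁆ = 0) :
    ∀ i j : Fin 3,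
      ⁅(![X₁ - b • X₂, X₂, X₃] : Fin 3 → g) j,
        ⁅(![X₁ - b • X₂, X₂, X₃] : Fin 3 → g) j,
          (![X₁ - b • X₂, X₂, X₃] : Fin 3 → g) i⁆⁆ = 0 := by
  have hY3 : ⁅X₁ - b • X₂, X₃⁆ = 0 := by
    rw [sub_lie, smul_lie, h13, sub_self]
  have h212 : ⁅X₂, ⁅X₁, X₂⁆⁆ = 0 := by
    have := h221; rw [← lie_skew X₂ X₁, lie_neg, neg_eq_zero] at this; exact this
  have h332 : ⁅X₃, ⁅X₃, X₂⁆⁆ = 0 := by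
    have := h323; rw [← lie_skew X₂ X₃, lie_neg, neg_eq_zero] at this; exact this
  intro i j
  fin_cases i <;> fin_cases j <;>
    simp [lie_sub, sub_lie, lie_smul, smul_lie, hY3, h112, h212, h221, h223, h323, h332,
      ← lie_skew X₃ (X₁ - b • X₂), hY3]
end

section
/- Let g be a stratified Lie algebra of type ⋆ obtained as the quotient of the free nilpotent Lie algebra of step 3 on 3 generators by the ideal generated by all [X_j,[X_j,X_i]]. Then the Lie subalgebra generated by {X₁+X₂, X₃} is a filiform stratified subalgebra of step 3: [X₁+X₂,X₃] ≠ 0, [X₁+X₂,[X₁+X₂,X₃]] ≠ 0, and [X₃,[X₁+X₂,X₃]] = 0. In particular, the type ⋆ property is not inherited by stratified subalgebras. -/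
/-- The free nilpotent Lie algebra of step 3 on 3 generators. -/
abbrev FreeNilp3 : Type :=
  FreeLieAlgebra ℝ (Fin 3) ⧸
    LieModule.lowerCentralSeries ℝ (FreeLieAlgebra ℝ (Fin 3)) (FreeLieAlgebra ℝ (Fin 3)) 3

/-- The images `X₁, X₂, X₃` of the generators in the free nilpotent Lie algebra. -/
noncomputable def genX (i : Fin 3) : FreeNilp3 :=
  LieSubmodule.Quotient.mk' _ (FreeLieAlgebra.of ℝ i)

/-- The homogeneous ideal generated by the elements `⁅X_j, ⁅X_j, X_i⁆⁆`. -/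
noncomputable def starIdeal : LieIdeal ℝ FreeNilp3 :=
  LieSubmodule.lieSpan ℝ FreeNilp3 {z | ∃ i j : Fin 3, z = ⁅genX j, ⁅genX j, genX i⁆⁆}

/-- The type ⋆ quotient `g` of the free nilpotent Lie algebra of step 3 on 3 generators by
the ideal generated by all `⁅X_j, ⁅X_j, X_i⁆⁆`. -/
abbrev QuotAlg : Type := FreeNilp3 ⧸ starIdeal

/-- The images `X₁, X₂, X₃` of the generators in the quotient. -/
noncomputable def genY (i : Fin 3) : QuotAlg := LieSubmodule.Quotient.mk' starIdeal (genX i)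

/-- First layer of the subalgebra generated by `{X₁ + X₂, X₃}`. -/
noncomputable def W1 : Submodule ℝ QuotAlg := Submodule.span ℝ {genY 0 + genY 1, genY 2}

/-- Second layer of the subalgebra generated by `{X₁ + X₂, X₃}`. -/
noncomputable def W2 : Submodule ℝ QuotAlg := bracketSpan W1 W1

/-- Third layer of the subalgebra generated by `{X₁ + X₂, X₃}`. -/
noncomputable def W3 : Submodule ℝ QuotAlg := bracketSpan W1 W2



def HT : Type := Fin 8 → ℝ

noncomputable instance : AddCommGroup HT := inferInstanceAs (AddCommGroup (Fin 8 → ℝ))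
noncomputable instance : Module ℝ HT := inferInstanceAs (Module ℝ (Fin 8 → ℝ))

/-- structure-constant bracket on the 8-dim model. -/
noncomputable def hbr (u v : HT) : HT :=
  ![0, 0, 0,
    u 0 * v 1 - u 1 * v 0,
    u 0 * v 2 - u 2 * v 0,
    u 1 * v 2 - u 2 * v 1,
    u 0 * v 5 - u 5 * v 0 - (u 2 * v 3 - u 3 * v 2),
    u 1 * v 4 - u 4 * v 1 + (u 2 * v 3 - u 3 * v 2)]

noncomputable instance : Bracket HT HT := ⟨hbr⟩

lemma HT.add_apply (u v : HT) (i : Fin 8) : (u + v) i = u i + v i := rfl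
lemma HT.smul_apply (t : ℝ) (u : HT) (i : Fin 8) : (t • u) i = t * u i := rfl
lemma HT.zero_apply (i : Fin 8) : (0 : HT) i = 0 := rfl
lemma HT.bracket_def (u v : HT) : ⁅u, v⁆ = hbr u v := rfl

lemma hbr0 (u v : HT) : hbr u v 0 = 0 := rfl
lemma hbr1 (u v : HT) : hbr u v 1 = 0 := rfl
lemma hbr2 (u v : HT) : hbr u v 2 = 0 := rfl
lemma hbr3 (u v : HT) : hbr u v 3 = u 0 * v 1 - u 1 * v 0 := rfl
lemma hbr4 (u v : HT) : hbr u v 4 = u 0 * v 2 - u 2 * v 0 := rfl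
lemma hbr5 (u v : HT) : hbr u v 5 = u 1 * v 2 - u 2 * v 1 := rfl
lemma hbr6 (u v : HT) : hbr u v 6 = u 0 * v 5 - u 5 * v 0 - (u 2 * v 3 - u 3 * v 2) := rfl
lemma hbr7 (u v : HT) : hbr u v 7 = u 1 * v 4 - u 4 * v 1 + (u 2 * v 3 - u 3 * v 2) := rfl

lemma hbr0' (u v : HT) (h : 0 < 8) : hbr u v ⟨0, h⟩ = 0 := rfl
lemma hbr1' (u v : HT) (h : 1 < 8) : hbr u v ⟨1, h⟩ = 0 := rfl
lemma hbr2' (u v : HT) (h : 2 < 8) : hbr u v ⟨2, h⟩ = 0 := rfl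
lemma hbr3' (u v : HT) (h : 3 < 8) : hbr u v ⟨3, h⟩ = u 0 * v 1 - u 1 * v 0 := rfl
lemma hbr4' (u v : HT) (h : 4 < 8) : hbr u v ⟨4, h⟩ = u 0 * v 2 - u 2 * v 0 := rfl
lemma hbr5' (u v : HT) (h : 5 < 8) : hbr u v ⟨5, h⟩ = u 1 * v 2 - u 2 * v 1 := rfl
lemma hbr6' (u v : HT) (h : 6 < 8) : hbr u v ⟨6, h⟩ = u 0 * v 5 - u 5 * v 0 - (u 2 * v 3 - u 3 * v 2) := rfl
lemma hbr7' (u v : HT) (h : 7 < 8) : hbr u v ⟨7, h⟩ = u 1 * v 4 - u 4 * v 1 + (u 2 * v 3 - u 3 * v 2) := rfl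

noncomputable instance : LieRing HT where
  add_lie u v w := by
    funext i; fin_cases i <;>
      simp only [HT.bracket_def, HT.add_apply, HT.zero_apply, hbr0', hbr1', hbr2', hbr3', hbr4', hbr5', hbr6', hbr7', hbr0, hbr1, hbr2, hbr3, hbr4, hbr5, hbr6, hbr7] <;> ring
  lie_add u v w := by
    funext i; fin_cases i <;>
      simp only [HT.bracket_def, HT.add_apply, HT.zero_apply, hbr0', hbr1', hbr2', hbr3', hbr4', hbr5', hbr6', hbr7', hbr0, hbr1, hbr2, hbr3, hbr4, hbr5, hbr6, hbr7] <;> ring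
  lie_self u := by
    funext i; fin_cases i <;>
      simp only [HT.bracket_def, HT.add_apply, HT.zero_apply, hbr0', hbr1', hbr2', hbr3', hbr4', hbr5', hbr6', hbr7', hbr0, hbr1, hbr2, hbr3, hbr4, hbr5, hbr6, hbr7] <;> ring
  leibniz_lie u v w := by
    funext i; fin_cases i <;>
      simp only [HT.bracket_def, HT.add_apply, HT.zero_apply, hbr0', hbr1', hbr2', hbr3', hbr4', hbr5', hbr6', hbr7', hbr0, hbr1, hbr2, hbr3, hbr4, hbr5, hbr6, hbr7] <;> ring

noncomputable instance : LieAlgebra ℝ HT where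
  lie_smul t u v := by
    funext i; fin_cases i <;>
      simp only [HT.bracket_def, HT.add_apply, HT.smul_apply, HT.zero_apply, hbr0', hbr1', hbr2', hbr3', hbr4', hbr5', hbr6', hbr7', hbr0, hbr1, hbr2, hbr3, hbr4, hbr5, hbr6, hbr7] <;> ring

/-- images of the three generators in the model. -/
noncomputable def Gv : Fin 3 → HT :=
  ![![1,0,0,0,0,0,0,0], ![0,1,0,0,0,0,0,0], ![0,0,1,0,0,0,0,0]]

lemma Gv00 : Gv 0 0 = 1 := rfl
lemma Gv01 : Gv 0 1 = 0 := rfl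
lemma Gv02 : Gv 0 2 = 0 := rfl
lemma Gv03 : Gv 0 3 = 0 := rfl
lemma Gv04 : Gv 0 4 = 0 := rfl
lemma Gv05 : Gv 0 5 = 0 := rfl
lemma Gv06 : Gv 0 6 = 0 := rfl
lemma Gv07 : Gv 0 7 = 0 := rfl
lemma Gv10 : Gv 1 0 = 0 := rfl
lemma Gv11 : Gv 1 1 = 1 := rfl
lemma Gv12 : Gv 1 2 = 0 := rfl
lemma Gv13 : Gv 1 3 = 0 := rfl
lemma Gv14 : Gv 1 4 = 0 := rfl
lemma Gv15 : Gv 1 5 = 0 := rfl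
lemma Gv16 : Gv 1 6 = 0 := rfl
lemma Gv17 : Gv 1 7 = 0 := rfl
lemma Gv20 : Gv 2 0 = 0 := rfl
lemma Gv21 : Gv 2 1 = 0 := rfl
lemma Gv22 : Gv 2 2 = 1 := rfl
lemma Gv23 : Gv 2 3 = 0 := rfl
lemma Gv24 : Gv 2 4 = 0 := rfl
lemma Gv25 : Gv 2 5 = 0 := rfl
lemma Gv26 : Gv 2 6 = 0 := rfl
lemma Gv27 : Gv 2 7 = 0 := rfl

lemma G_rel (i j : Fin 3) : ⁅Gv j, ⁅Gv j, Gv i⁆⁆ = 0 := by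
  fin_cases i <;> fin_cases j <;>
    (funext k; fin_cases k <;>
      simp only [HT.bracket_def, HT.zero_apply, hbr0', hbr1', hbr2', hbr3', hbr4', hbr5',
        hbr6', hbr7', hbr0, hbr1, hbr2, hbr3, hbr4, hbr5, hbr6, hbr7,
        Matrix.cons_val_zero, Matrix.cons_val_one, Matrix.head_cons] <;> norm_num [Gv00, Gv01, Gv02, Gv03, Gv04, Gv05, Gv06, Gv07, Gv10, Gv11, Gv12, Gv13, Gv14, Gv15, Gv16, Gv17, Gv20, Gv21, Gv22, Gv23, Gv24, Gv25, Gv26, Gv27, show ∀ h, Gv ⟨2, h⟩ = Gv 2 from fun _ => rfl, show ∀ h, Gv ⟨1, h⟩ = Gv 1 from fun _ => rfl])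

/-- the universal map from the free Lie algebra. -/
noncomputable def φ : FreeLieAlgebra ℝ (Fin 3) →ₗ⁅ℝ⁆ HT := FreeLieAlgebra.lift ℝ Gv

/-- First test: lower central series of HT. -/
noncomputable def S1 : LieIdeal ℝ HT :=
  { carrier := {u : HT | u 0 = 0 ∧ u 1 = 0 ∧ u 2 = 0}
    add_mem' := by
      rintro u v ⟨h0,h1,h2⟩ ⟨k0,k1,k2⟩
      refine ⟨?_,?_,?_⟩ <;> simp_all [HT.add_apply]
    zero_mem' := ⟨rfl, rfl, rfl⟩
    smul_mem' := by
      rintro t u ⟨h0,h1,h2⟩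
      refine ⟨?_,?_,?_⟩ <;> simp_all [HT.smul_apply]
    lie_mem := by intro x m _; exact ⟨rfl, rfl, rfl⟩ }

lemma mem_S1 {u : HT} : u ∈ S1 ↔ (u 0 = 0 ∧ u 1 = 0 ∧ u 2 = 0) := Iff.rfl

noncomputable def S2 : LieIdeal ℝ HT :=
  { carrier := {u : HT | u 0 = 0 ∧ u 1 = 0 ∧ u 2 = 0 ∧ u 3 = 0 ∧ u 4 = 0 ∧ u 5 = 0}
    add_mem' := by
      rintro u v ⟨h0,h1,h2,h3,h4,h5⟩ ⟨k0,k1,k2,k3,k4,k5⟩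
      refine ⟨?_,?_,?_,?_,?_,?_⟩ <;> simp_all [HT.add_apply]
    zero_mem' := ⟨rfl, rfl, rfl, rfl, rfl, rfl⟩
    smul_mem' := by
      rintro t u ⟨h0,h1,h2,h3,h4,h5⟩
      refine ⟨?_,?_,?_,?_,?_,?_⟩ <;> simp_all [HT.smul_apply]
    lie_mem := by
      rintro x m ⟨h0,h1,h2,h3,h4,h5⟩
      refine ⟨rfl, rfl, rfl, ?_, ?_, ?_⟩ <;>
        simp [HT.bracket_def, hbr3, hbr4, hbr5, h0, h1, h2] }

lemma mem_S2 {u : HT} :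
    u ∈ S2 ↔ (u 0 = 0 ∧ u 1 = 0 ∧ u 2 = 0 ∧ u 3 = 0 ∧ u 4 = 0 ∧ u 5 = 0) := Iff.rfl

lemma lcs3_HT : LieModule.lowerCentralSeries ℝ HT HT 3 = ⊥ := by
  have h1 : LieModule.lowerCentralSeries ℝ HT HT 1 ≤ S1 := by
    rw [show (1:ℕ) = 0+1 from rfl, LieModule.lowerCentralSeries_succ]
    rw [LieSubmodule.lie_le_iff]
    intro x _ m _
    exact ⟨rfl, rfl, rfl⟩
  have h2 : LieModule.lowerCentralSeries ℝ HT HT 2 ≤ S2 := by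
    rw [show (2:ℕ) = 1+1 from rfl, LieModule.lowerCentralSeries_succ]
    refine le_trans (LieSubmodule.mono_lie_right _ h1) ?_
    rw [LieSubmodule.lie_le_iff]
    intro x _ m hm
    obtain ⟨h0,h1,h2⟩ := mem_S1.mp hm
    rw [mem_S2]
    refine ⟨rfl, rfl, rfl, ?_, ?_, ?_⟩ <;>
      simp [HT.bracket_def, hbr3, hbr4, hbr5, h0, h1, h2]
  rw [show (3:ℕ) = 2+1 from rfl, LieModule.lowerCentralSeries_succ, eq_bot_iff]
  refine le_trans (LieSubmodule.mono_lie_right _ h2) ?_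
  rw [LieSubmodule.lie_le_iff]
  intro x _ m hm
  obtain ⟨h0,h1,h2,h3,h4,h5⟩ := mem_S2.mp hm
  rw [LieSubmodule.mem_bot]
  funext k; fin_cases k <;>
    simp [HT.bracket_def, HT.zero_apply, hbr0', hbr1', hbr2', hbr3', hbr4', hbr5', hbr6', hbr7',
      hbr0, hbr1, hbr2, hbr3, hbr4, hbr5, hbr6, hbr7, h0, h1, h2, h3, h4, h5]

/-- Lift a Lie algebra hom through a quotient by an ideal inside its kernel. -/
noncomputable def lieQuotLift {L L' : Type*} [LieRing L] [LieAlgebra ℝ L]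
    [LieRing L'] [LieAlgebra ℝ L'] (I : LieIdeal ℝ L) (f : L →ₗ⁅ℝ⁆ L')
    (h : ∀ x ∈ I, f x = 0) : (L ⧸ I) →ₗ⁅ℝ⁆ L' :=
  { Submodule.liftQ (I : Submodule ℝ L) (f : L →ₗ[ℝ] L')
      (fun x hx => by simpa using h x hx) with
    map_lie' := by
      intro x y
      obtain ⟨x, rfl⟩ := LieSubmodule.Quotient.surjective_mk' I x
      obtain ⟨y, rfl⟩ := LieSubmodule.Quotient.surjective_mk' I y
      exact f.map_lie x y }

lemma lieQuotLift_mk {L L' : Type*} [LieRing L] [LieAlgebra ℝ L]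
    [LieRing L'] [LieAlgebra ℝ L'] (I : LieIdeal ℝ L) (f : L →ₗ⁅ℝ⁆ L')
    (h : ∀ x ∈ I, f x = 0) (x : L) :
    lieQuotLift I f h (LieSubmodule.Quotient.mk' I x) = f x := rfl

noncomputable def ψ1 : FreeNilp3 →ₗ⁅ℝ⁆ HT :=
  lieQuotLift _ φ (fun x hx => by
    have h2 : φ x ∈ LieModule.lowerCentralSeries ℝ HT HT 3 :=
      LieIdeal.map_lowerCentralSeries_le 3 (LieIdeal.mem_map hx)
    rw [lcs3_HT, LieSubmodule.mem_bot] at h2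
    exact h2)

lemma ψ1_genX (i : Fin 3) : ψ1 (genX i) = Gv i := by
  show φ (FreeLieAlgebra.of ℝ i) = Gv i
  simp [φ, FreeLieAlgebra.lift_of_apply]

lemma starIdeal_ker : ∀ x ∈ starIdeal, ψ1 x = 0 := by
  have hle : starIdeal ≤ ψ1.ker := by
    rw [starIdeal, LieSubmodule.lieSpan_le]
    rintro z ⟨i, j, rfl⟩
    rw [SetLike.mem_coe, LieHom.mem_ker]
    rw [LieHom.map_lie, LieHom.map_lie, ψ1_genX, ψ1_genX]
    exact G_rel i j
  exact fun x hx => LieHom.mem_ker.mp (hle hx)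

noncomputable def ψ : QuotAlg →ₗ⁅ℝ⁆ HT := lieQuotLift starIdeal ψ1 starIdeal_ker

lemma ψ_genY (i : Fin 3) : ψ (genY i) = Gv i := by
  show ψ1 (genX i) = Gv i
  exact ψ1_genX i



lemma mk_lcs3 (a b c d : FreeLieAlgebra ℝ (Fin 3)) :
    (LieSubmodule.Quotient.mk'
      (LieModule.lowerCentralSeries ℝ (FreeLieAlgebra ℝ (Fin 3)) (FreeLieAlgebra ℝ (Fin 3)) 3)
      ⁅a, ⁅b, ⁅c, d⁆⁆⁆ : FreeNilp3) = 0 := by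
  rw [LieSubmodule.Quotient.mk_eq_zero]
  have h1 : ⁅c, d⁆ ∈
      LieModule.lowerCentralSeries ℝ (FreeLieAlgebra ℝ (Fin 3)) (FreeLieAlgebra ℝ (Fin 3)) 1 := by
    have h0 := LieSubmodule.lie_mem_lie (LieSubmodule.mem_top c)
      (N := LieModule.lowerCentralSeries ℝ (FreeLieAlgebra ℝ (Fin 3)) (FreeLieAlgebra ℝ (Fin 3)) 0)
      (by rw [LieModule.lowerCentralSeries_zero]; exact LieSubmodule.mem_top d)
    rw [← LieModule.lowerCentralSeries_succ] at h0
    exact h0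
  have h2 : ⁅b, ⁅c, d⁆⁆ ∈
      LieModule.lowerCentralSeries ℝ (FreeLieAlgebra ℝ (Fin 3)) (FreeLieAlgebra ℝ (Fin 3)) 2 := by
    have h0 := LieSubmodule.lie_mem_lie (LieSubmodule.mem_top b) h1
    rw [← LieModule.lowerCentralSeries_succ] at h0
    exact h0
  have h3 := LieSubmodule.lie_mem_lie (LieSubmodule.mem_top a) h2
  rw [← LieModule.lowerCentralSeries_succ] at h3
  exact h3

lemma four_gen (a b c d : Fin 3) : ⁅genY a, ⁅genY b, ⁅genY c, genY d⁆⁆⁆ = 0 := by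
  have key : ⁅genX a, ⁅genX b, ⁅genX c, genX d⁆⁆⁆ = (0 : FreeNilp3) := mk_lcs3 _ _ _ _
  have : ⁅genY a, ⁅genY b, ⁅genY c, genY d⁆⁆⁆ =
      LieSubmodule.Quotient.mk' starIdeal ⁅genX a, ⁅genX b, ⁅genX c, genX d⁆⁆⁆ := rfl
  rw [this, key, map_zero]

lemma starY (i j : Fin 3) : ⁅genY j, ⁅genY j, genY i⁆⁆ = 0 := by
  have : ⁅genY j, ⁅genY j, genY i⁆⁆ =
      LieSubmodule.Quotient.mk' starIdeal ⁅genX j, ⁅genX j, genX i⁆⁆ := rfl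
  rw [this, LieSubmodule.Quotient.mk_eq_zero]
  exact LieSubmodule.subset_lieSpan ⟨i, j, rfl⟩

lemma hψc : ψ ⁅genY 0 + genY 1, genY 2⁆ = ⁅Gv 0 + Gv 1, Gv 2⁆ := by
  rw [LieHom.map_lie, map_add, ψ_genY, ψ_genY, ψ_genY]

lemma c_ne : ⁅genY 0 + genY 1, genY 2⁆ ≠ 0 := by
  intro h
  have h4 : (⁅Gv 0 + Gv 1, Gv 2⁆ : HT) 4 = 1 := by
    norm_num [HT.bracket_def, hbr4, HT.add_apply, Gv00, Gv01, Gv02, Gv03, Gv04, Gv05, Gv06, Gv07, Gv10, Gv11, Gv12, Gv13, Gv14, Gv15, Gv16, Gv17, Gv20, Gv21, Gv22, Gv23, Gv24, Gv25, Gv26, Gv27]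
  rw [← hψc, h, map_zero] at h4
  exact zero_ne_one h4

lemma hψd : ψ ⁅genY 0 + genY 1, ⁅genY 0 + genY 1, genY 2⁆⁆ =
    ⁅Gv 0 + Gv 1, ⁅Gv 0 + Gv 1, Gv 2⁆⁆ := by
  rw [LieHom.map_lie, map_add, ψ_genY, ψ_genY, hψc]

lemma d_ne : ⁅genY 0 + genY 1, ⁅genY 0 + genY 1, genY 2⁆⁆ ≠ 0 := by
  intro h
  have h6 : (⁅Gv 0 + Gv 1, ⁅Gv 0 + Gv 1, Gv 2⁆⁆ : HT) 6 = 1 := by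
    norm_num [HT.bracket_def, hbr6, hbr5, hbr0, hbr3, hbr2, HT.add_apply, Gv00, Gv01, Gv02, Gv03, Gv04, Gv05, Gv06, Gv07, Gv10, Gv11, Gv12, Gv13, Gv14, Gv15, Gv16, Gv17, Gv20, Gv21, Gv22, Gv23, Gv24, Gv25, Gv26, Gv27]
  rw [← hψd, h, map_zero] at h6
  exact zero_ne_one h6

lemma hvc : ⁅genY 2, ⁅genY 0 + genY 1, genY 2⁆⁆ = 0 := by
  have e0 : ⁅genY (0 : Fin 3), genY 2⁆ = -⁅genY 2, genY 0⁆ := (lie_skew _ _).symm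
  have e1 : ⁅genY (1 : Fin 3), genY 2⁆ = -⁅genY 2, genY 1⁆ := (lie_skew _ _).symm
  rw [add_lie, lie_add, e0, e1, lie_neg, lie_neg, starY 0 2, starY 1 2, neg_zero, add_zero]

lemma expand2 {L : Type*} [LieRing L] [LieAlgebra ℝ L] (u v : L) (s t s' t' : ℝ) :
    ⁅s • u + t • v, s' • u + t' • v⁆ = (s * t' - t * s') • ⁅u, v⁆ := by
  have hvu : ⁅v, u⁆ = -⁅u, v⁆ := neg_eq_iff_eq_neg.mp (lie_skew _ _)
  simp only [add_lie, lie_add, smul_lie, lie_smul, lie_self, smul_zero, zero_add, add_zero,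
    hvu, smul_neg, smul_smul, sub_smul]
  module

lemma expand3 {L : Type*} [LieRing L] [LieAlgebra ℝ L] (u v c : L) (h : ⁅v, c⁆ = 0) (s t r : ℝ) :
    ⁅s • u + t • v, r • c⁆ = (s * r) • ⁅u, c⁆ := by
  simp only [add_lie, lie_smul, smul_lie, h, smul_zero, add_zero, smul_smul]
  module

lemma hW2 : W2 = Submodule.span ℝ {⁅genY 0 + genY 1, genY 2⁆} := by
  apply le_antisymm
  · rw [W2, bracketSpan, Submodule.span_le]
    rintro x ⟨a, ha, b, hb, rfl⟩
    rw [W1] at ha hb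
    obtain ⟨s, t, rfl⟩ := Submodule.mem_span_pair.mp ha
    obtain ⟨s', t', rfl⟩ := Submodule.mem_span_pair.mp hb
    rw [SetLike.mem_coe, expand2]
    exact Submodule.smul_mem _ _ (Submodule.mem_span_singleton_self _)
  · rw [Submodule.span_le, Set.singleton_subset_iff]
    exact Submodule.subset_span
      ⟨genY 0 + genY 1, Submodule.subset_span (Set.mem_insert _ _),
       genY 2, Submodule.subset_span (Set.mem_insert_of_mem _ rfl), rfl⟩

lemma hW3 : W3 = Submodule.span ℝ {⁅genY 0 + genY 1, ⁅genY 0 + genY 1, genY 2⁆⁆} := by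
  apply le_antisymm
  · rw [W3, bracketSpan, Submodule.span_le]
    rintro x ⟨a, ha, b, hb, rfl⟩
    rw [W1] at ha
    rw [hW2] at hb
    obtain ⟨s, t, rfl⟩ := Submodule.mem_span_pair.mp ha
    obtain ⟨r, rfl⟩ := Submodule.mem_span_singleton.mp hb
    rw [SetLike.mem_coe, expand3 _ _ _ hvc]
    exact Submodule.smul_mem _ _ (Submodule.mem_span_singleton_self _)
  · rw [Submodule.span_le, Set.singleton_subset_iff]
    refine Submodule.subset_span
      ⟨genY 0 + genY 1, Submodule.subset_span (Set.mem_insert _ _),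
       ⁅genY 0 + genY 1, genY 2⁆, ?_, rfl⟩
    rw [hW2]
    exact Submodule.mem_span_singleton_self _

lemma hud : ⁅genY 0 + genY 1, ⁅genY 0 + genY 1, ⁅genY 0 + genY 1, genY 2⁆⁆⁆ = 0 := by
  simp only [add_lie, lie_add]
  simp [four_gen]

lemma hvd : ⁅genY 2, ⁅genY 0 + genY 1, ⁅genY 0 + genY 1, genY 2⁆⁆⁆ = 0 := by
  simp only [add_lie, lie_add]
  simp [four_gen]

lemma hindep : LinearIndependent ℝ ![genY 0 + genY 1, genY 2] := by
  apply LinearIndependent.of_comp ψ.toLinearMap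
  have heq : ψ.toLinearMap ∘ ![genY 0 + genY 1, genY 2] = ![Gv 0 + Gv 1, Gv 2] := by
    funext i
    fin_cases i <;> simp [LieHom.coe_toLinearMap, ψ_genY, map_add]
  rw [heq, LinearIndependent.pair_iff]
  intro s t hst
  have h0 := congrFun hst 0
  have h2 := congrFun hst 2
  rw [HT.add_apply, HT.smul_apply, HT.smul_apply, HT.add_apply, HT.zero_apply] at h0 h2
  simp only [Gv00, Gv10, Gv20, Gv02, Gv12, Gv22] at h0 h2
  constructor <;> linarith

/-- In the type ⋆ quotient `g` of the free step-3 nilpotent Lie algebra on 3 generators by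
all `⁅X_j, ⁅X_j, X_i⁆⁆`, the Lie subalgebra generated by `{X₁ + X₂, X₃}` is a filiform
stratified subalgebra of step 3: `⁅X₁+X₂, X₃⁆ ≠ 0`, `⁅X₁+X₂, ⁅X₁+X₂, X₃⁆⁆ ≠ 0`,
`⁅X₃, ⁅X₁+X₂, X₃⁆⁆ = 0`, and its layers have dimensions `2, 1, 1` with the next layer
vanishing.  In particular the type ⋆ property is not inherited by stratified subalgebras. -/
theorem stmt_15 :
    ⁅genY 0 + genY 1, genY 2⁆ ≠ 0 ∧
    ⁅genY 0 + genY 1, ⁅genY 0 + genY 1, genY 2⁆⁆ ≠ 0 ∧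
    ⁅genY 2, ⁅genY 0 + genY 1, genY 2⁆⁆ = 0 ∧
    Module.finrank ℝ W1 = 2 ∧ Module.finrank ℝ W2 = 1 ∧ Module.finrank ℝ W3 = 1 ∧
    bracketSpan W1 W3 = ⊥ := by
  refine ⟨c_ne, d_ne, hvc, ?_, ?_, ?_, ?_⟩
  · have hs : Set.range ![genY 0 + genY 1, genY 2] = {genY 0 + genY 1, genY 2} := by
      simp [Matrix.range_cons, Matrix.range_empty, Set.pair_comm]
    rw [W1, ← hs, finrank_span_eq_card hindep]
    simp
  · rw [hW2]
    exact finrank_span_singleton c_ne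
  · rw [hW3]
    exact finrank_span_singleton d_ne
  · rw [eq_bot_iff, bracketSpan, Submodule.span_le]
    rintro x ⟨a, ha, b, hb, rfl⟩
    rw [W1] at ha
    rw [hW3] at hb
    obtain ⟨s, t, rfl⟩ := Submodule.mem_span_pair.mp ha
    obtain ⟨r, rfl⟩ := Submodule.mem_span_singleton.mp hb
    have e : ⁅s • (genY 0 + genY 1) + t • genY 2,
        r • ⁅genY 0 + genY 1, ⁅genY 0 + genY 1, genY 2⁆⁆⁆ = 0 := by
      rw [expand3 _ _ _ hvd, hud, smul_zero]
    rw [SetLike.mem_coe, e]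
    exact Submodule.zero_mem ⊥
end

section
/- Let X₁ = ∂/∂x₁ and X₂ = ∂/∂x₂ − x₁ ∂/∂x₃ + (x₁²/2) ∂/∂x₄ be vector fields on ℝ⁴ (generators of the Engel group in suitable coordinates), and let f(x₁,x₂,x₃,x₄) = x₂³/3 + 2x₄. Then f is homogeneous of degree 3 under the dilations δ_λ(x₁,x₂,x₃,x₄) = (λx₁, λx₂, λ²x₃, λ³x₄), i.e. f(δ_λ x) = λ³ f(x) for all λ > 0, and the horizontal gradient satisfies X₁f = 0 and X₂f(x) = x₁² + x₂² ≥ 0, vanishing only when x₁ = x₂ = 0. -/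
/-- The function `f(x₁,x₂,x₃,x₄) = x₂³/3 + 2x₄` on `ℝ⁴` (coordinates 0-indexed). -/
noncomputable def fEngel : (Fin 4 → ℝ) → ℝ := fun x => x 1 ^ 3 / 3 + 2 * x 3

/-- The Engel dilations `δ_λ(x₁,x₂,x₃,x₄) = (λx₁, λx₂, λ²x₃, λ³x₄)`. -/
def dil (l : ℝ) (x : Fin 4 → ℝ) : Fin 4 → ℝ :=
  ![l * x 0, l * x 1, l ^ 2 * x 2, l ^ 3 * x 3]

/-- The vector field `X₁ = ∂/∂x₁` applied to a function `g` at `x`. -/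
noncomputable def X1 (g : (Fin 4 → ℝ) → ℝ) (x : Fin 4 → ℝ) : ℝ :=
  fderiv ℝ g x (Pi.single 0 1)

/-- The vector field `X₂ = ∂/∂x₂ - x₁ ∂/∂x₃ + (x₁²/2) ∂/∂x₄` applied to `g` at `x`. -/
noncomputable def X2 (g : (Fin 4 → ℝ) → ℝ) (x : Fin 4 → ℝ) : ℝ :=
  fderiv ℝ g x (Pi.single 1 1) - x 0 * fderiv ℝ g x (Pi.single 2 1) +
    x 0 ^ 2 / 2 * fderiv ℝ g x (Pi.single 3 1)

lemma fEngel_hasFDerivAt (x : Fin 4 → ℝ) :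
    HasFDerivAt fEngel
      (x 1 ^ 2 • (ContinuousLinearMap.proj 1 : (Fin 4 → ℝ) →L[ℝ] ℝ) +
        (2 : ℝ) • (ContinuousLinearMap.proj 3 : (Fin 4 → ℝ) →L[ℝ] ℝ)) x := by
  have h1 : HasFDerivAt (fun y : Fin 4 → ℝ => y 1)
      (ContinuousLinearMap.proj 1 : (Fin 4 → ℝ) →L[ℝ] ℝ) x :=
    (ContinuousLinearMap.proj (R := ℝ) (φ := fun _ : Fin 4 => ℝ) 1).hasFDerivAt
  have h3 : HasFDerivAt (fun y : Fin 4 → ℝ => y 3)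
      (ContinuousLinearMap.proj 3 : (Fin 4 → ℝ) →L[ℝ] ℝ) x :=
    (ContinuousLinearMap.proj (R := ℝ) (φ := fun _ : Fin 4 => ℝ) 3).hasFDerivAt
  have hcube : HasFDerivAt (fun y : Fin 4 → ℝ => y 1 * y 1 * y 1)
      _ x := (h1.mul h1).mul h1
  have H := (hcube.const_mul (1/3 : ℝ)).add (h3.const_mul 2)
  have hfe : fEngel = fun y : Fin 4 → ℝ => 1/3 * (y 1 * y 1 * y 1) + 2 * y 3 := by
    funext y; simp [fEngel]; ring
  rw [hfe]
  refine HasFDerivAt.congr_fderiv H ?_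
  ext v
  simp [ContinuousLinearMap.proj]
  ring

lemma fEngel_fderiv (x : Fin 4 → ℝ) (v : Fin 4 → ℝ) :
    fderiv ℝ fEngel x v = x 1 ^ 2 * v 1 + 2 * v 3 := by
  rw [(fEngel_hasFDerivAt x).fderiv]
  simp [ContinuousLinearMap.proj]

/-- For `f(x) = x₂³/3 + 2x₄` on the Engel group: `f` is homogeneous of degree 3 under the
dilations `δ_λ`, and the horizontal gradient satisfies `X₁ f = 0` and
`X₂ f(x) = x₁² + x₂² ≥ 0`, which vanishes exactly when `x₁ = x₂ = 0`. -/
theorem stmt_18 :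
    (∀ l : ℝ, 0 < l → ∀ x : Fin 4 → ℝ, fEngel (dil l x) = l ^ 3 * fEngel x) ∧
    (∀ x : Fin 4 → ℝ, X1 fEngel x = 0) ∧
    (∀ x : Fin 4 → ℝ, X2 fEngel x = x 0 ^ 2 + x 1 ^ 2) ∧
    (∀ x : Fin 4 → ℝ, 0 ≤ X2 fEngel x) ∧
    (∀ x : Fin 4 → ℝ, (X2 fEngel x = 0 ↔ x 0 = 0 ∧ x 1 = 0)) := by
  have hX2 : ∀ x : Fin 4 → ℝ, X2 fEngel x = x 0 ^ 2 + x 1 ^ 2 := by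
    intro x
    simp only [X2, fEngel_fderiv, Pi.single_eq_same]
    norm_num [Pi.single_apply, show (3:Fin 4) ≠ 1 by decide, show (1:Fin 4) ≠ 2 by decide,
      show (3:Fin 4) ≠ 2 by decide, show (1:Fin 4) ≠ 3 by decide]
    ring
  refine ⟨?_, ?_, hX2, ?_, ?_⟩
  · intro l hl x
    simp only [fEngel, dil]
    norm_num
    simp [Matrix.cons_val_three]
    ring
  · intro x
    simp [X1, fEngel_fderiv, Pi.single_apply]
  · intro x
    rw [hX2]; positivity
  · intro x
    rw [hX2]
    constructor
    · intro h
      constructor <;> nlinarith [sq_nonneg (x 0), sq_nonneg (x 1)]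
    · rintro ⟨h0, h1⟩; rw [h0, h1]; ring
end

section
/- Let A = (a_{ij}) be a real 3×3 matrix satisfying the five polynomial equations: a₁₁(a₁₁a₂₂ − a₁₂a₂₁) + a₁₁(a₁₁a₃₂ − a₁₂a₃₁) = 0; −a₂₁(a₁₁a₂₂ − a₁₂a₂₁) + a₁₁(a₁₁a₃₂ − a₁₂a₃₁) = 0; −a₂₁(a₁₁a₂₂ − a₁₂a₂₁) + a₂₁(a₂₁a₃₂ − a₂₂a₃₁) = 0; −a₃₁(a₁₁a₃₂ − a₁₂a₃₁) + a₂₁(a₂₁a₃₂ − a₂₂a₃₁) = 0; −a₃₁(a₁₁a₃₂ − a₁₂a₃₁) − a₃₁(a₂₁a₃₂ − a₂₂a₃₁) = 0. Then det A = 0. -/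
/-- Auxiliary: the algebraic core of Example 5.2. -/
lemma aux_minors (a b c d e f : ℝ)
    (e1 : a * (a * d - b * c) + a * (a * f - b * e) = 0)
    (e2 : -c * (a * d - b * c) + a * (a * f - b * e) = 0)
    (e3 : -c * (a * d - b * c) + c * (c * f - d * e) = 0)
    (e4 : -e * (a * f - b * e) + c * (c * f - d * e) = 0)
    (e5 : -e * (a * f - b * e) - e * (c * f - d * e) = 0) :
    a * d - b * c = 0 ∧ a * f - b * e = 0 ∧ c * f - d * e = 0 := by
  rcases eq_or_ne a 0 with ha | ha
  · subst ha
    -- e2 gives b*c^2 = 0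
    have hbc2 : b * c * c = 0 := by linear_combination e2
    have hbc : b * c = 0 := by
      rcases mul_eq_zero.mp hbc2 with h | h
      · exact h
      · rw [h, mul_zero]
    have hP : (0:ℝ) * d - b * c = 0 := by rw [hbc]; ring
    have hcR : c * (c * f - d * e) = 0 := by linear_combination e3 - c * hbc
    have hbe2 : b * e * e = 0 := by linear_combination e4 - hcR
    have hbe : b * e = 0 := by
      rcases mul_eq_zero.mp hbe2 with h | h
      · exact h
      · rw [h, mul_zero]
    have hQ : (0:ℝ) * f - b * e = 0 := by rw [hbe]; ring
    have heR : e * (c * f - d * e) = 0 := by linear_combination -e5 + e * hbe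
    have hR : c * f - d * e = 0 := by
      rcases mul_eq_zero.mp hcR with hc | hR
      · rcases mul_eq_zero.mp heR with he | hR
        · rw [hc, he]; ring
        · exact hR
      · exact hR
    exact ⟨hP, hQ, hR⟩
  · -- a ≠ 0
    have hPQ : a * ((a * d - b * c) + (a * f - b * e)) = 0 := by linear_combination e1
    have hQP : (a * f - b * e) = -(a * d - b * c) := by
      have := (mul_eq_zero.mp hPQ).resolve_left ha
      linarith
    have hacP : (a + c) * (a * d - b * c) = 0 := by
      linear_combination -e2 + a * hQP
    rcases mul_eq_zero.mp hacP with hac | hP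
    · -- c = -a, P ≠ 0 leads to contradiction; show P = 0 anyway
      have hc : c = -a := by linarith
      -- e3 : -c*P + c*R = 0, with c = -a ≠ 0 gives P = R
      have hPR : a * ((a * d - b * c) - (c * f - d * e)) = 0 := by
        linear_combination e3 + (a * d - b * c - (c * f - d * e)) * hc
      have hPR' : (a * d - b * c) = (c * f - d * e) := by
        have := (mul_eq_zero.mp hPR).resolve_left ha
        linarith
      -- e4 : -e*Q + c*R = 0 → (e - a) * P = 0
      have heaP : (e - a) * (a * d - b * c) = 0 := by
        linear_combination e4 + e * hQP - (c * f - d * e) * hc - a * hPR'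
      rcases mul_eq_zero.mp heaP with hea | hP
      · -- e = a ; Plücker identity forces a * P = 0
        have he : e = a := by linarith
        have haP : a * (a * d - b * c) = 0 := by
          -- a*R - c*Q + e*P = 0 identically
          linear_combination c * hQP + a * hPR' - (a * d - b * c) * he -
            (a * d - b * c) * hc
        have hP : a * d - b * c = 0 := (mul_eq_zero.mp haP).resolve_left ha
        refine ⟨hP, ?_, ?_⟩
        · rw [hQP, hP]; ring
        · rw [← hPR', hP]
      · refine ⟨hP, ?_, ?_⟩
        · rw [hQP, hP]; ring
        · rw [← hPR', hP]
    · -- P = 0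
      have hQ : a * f - b * e = 0 := by rw [hQP, hP]; ring
      -- e3 gives c * R = 0 ; Plücker gives a * R = c*Q - e*P = 0
      have haR : a * (c * f - d * e) = 0 := by
        linear_combination c * hQ - e * hP
      exact ⟨hP, hQ, (mul_eq_zero.mp haR).resolve_left ha⟩

/-- If a real 3×3 matrix `A = (aᵢⱼ)` satisfies the five polynomial equations arising in
Example 5.2 of the paper, then `det A = 0`. -/
theorem stmt_19 (A : Matrix (Fin 3) (Fin 3) ℝ)
    (h1 : A 0 0 * (A 0 0 * A 1 1 - A 0 1 * A 1 0) +
          A 0 0 * (A 0 0 * A 2 1 - A 0 1 * A 2 0) = 0)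
    (h2 : -(A 1 0) * (A 0 0 * A 1 1 - A 0 1 * A 1 0) +
          A 0 0 * (A 0 0 * A 2 1 - A 0 1 * A 2 0) = 0)
    (h3 : -(A 1 0) * (A 0 0 * A 1 1 - A 0 1 * A 1 0) +
          A 1 0 * (A 1 0 * A 2 1 - A 1 1 * A 2 0) = 0)
    (h4 : -(A 2 0) * (A 0 0 * A 2 1 - A 0 1 * A 2 0) +
          A 1 0 * (A 1 0 * A 2 1 - A 1 1 * A 2 0) = 0)
    (h5 : -(A 2 0) * (A 0 0 * A 2 1 - A 0 1 * A 2 0) -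
          A 2 0 * (A 1 0 * A 2 1 - A 1 1 * A 2 0) = 0) :
    A.det = 0 := by
  obtain ⟨hP, hQ, hR⟩ := aux_minors (A 0 0) (A 0 1) (A 1 0) (A 1 1) (A 2 0) (A 2 1)
    (by linear_combination h1) (by linear_combination h2) (by linear_combination h3)
    (by linear_combination h4) (by linear_combination h5)
  rw [Matrix.det_fin_three]
  linear_combination (A 2 2) * hP - (A 1 2) * hQ + (A 0 2) * hR
end
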